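/- arXiv:1810.07965 — 2 statements merged into one kernel-verified Lean document; each statement's English description precedes it below -/
import Mathlib

section
/- First Lommel integral for spherical Bessel functions with complex argument: if k ∈ ℂ with Im(k²) ≠ 0 and s_l is any solution of the spherical Bessel equation of order l, then d/dr [ r² · Im{ k · s_{l+1}(kr) · conj(s_l(kr)) } / Im(k²) ] = |s_l(kr)|² r², i.e., ∫₀^a |s_l(kr)|² r² dr = a² Im{k s_{l+1}(ka) conj(s_l(ka))}/Im(k²) (when s_l is regular at 0). -/
/-! Along the ray `z = k r`, write `a = s_l(kr)` and `b = s_{l+1}(kr)`. The recurrences give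
`a' = (l/r) a - k b` and `b' = k a - ((l+2)/r) b`, so in the derivative of `r² k b conj a` the
terms in `1/r` cancel and what is left is `r² (k² |a|² - |k|² |b|²)`, whose imaginary part is
`r² Im(k²) |a|²`. The integral follows by the fundamental theorem of calculus, the antiderivative
vanishing at `0`. -/

open Complex ComplexConjugate intervalIntegral

theorem deriv_succ_eq_of_recurrences {s : ℕ → ℂ → ℂ}
    (hrec1 : ∀ (n : ℕ) (z : ℂ), z ≠ 0 →
      deriv (s n) z = (n : ℂ) / z * s n z - s (n + 1) z)
    (hrec2 : ∀ (n : ℕ) (z : ℂ), z ≠ 0 →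
      s n z + s (n + 2) z = (2 * (n : ℂ) + 3) / z * s (n + 1) z)
    (n : ℕ) {z : ℂ} (hz : z ≠ 0) :
    deriv (s (n + 1)) z = s n z - ((n : ℂ) + 2) / z * s (n + 1) z := by
  have hnext : s (n + 2) z = (2 * (n : ℂ) + 3) / z * s (n + 1) z - s n z :=
    eq_sub_of_add_eq' (hrec2 n z hz)
  rw [hrec1 (n + 1) z hz, hnext]
  push_cast
  ring

theorem hasDerivAt_comp_mul_ofReal {f : ℂ → ℂ} {k : ℂ} {r : ℝ}
    (hf : DifferentiableAt ℂ f (k * r)) :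
    HasDerivAt (fun t : ℝ => f (k * t)) (k * deriv f (k * r)) r := by
  have h := (hf.hasDerivAt.comp (r : ℂ) ((hasDerivAt_id (r : ℂ)).const_mul k)).comp_ofReal
  simpa [mul_comm] using h

theorem hasDerivAt_comp_mul_ofReal_of_recurrences {s : ℕ → ℂ → ℂ}
    (hdiff : ∀ n, Differentiable ℂ (s n))
    (hrec1 : ∀ (n : ℕ) (z : ℂ), z ≠ 0 →
      deriv (s n) z = (n : ℂ) / z * s n z - s (n + 1) z)
    (n : ℕ) {k : ℂ} (hk : k ≠ 0) {r : ℝ} (hr : r ≠ 0) :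
    HasDerivAt (fun t : ℝ => s n (k * t)) ((n : ℝ) / r * s n (k * r) - k * s (n + 1) (k * r)) r := by
  have hkr : k * r ≠ 0 := mul_ne_zero hk (ofReal_ne_zero.mpr hr)
  refine (hasDerivAt_comp_mul_ofReal (hdiff n _)).congr_deriv ?_
  rw [hrec1 n _ hkr]
  field_simp
  push_cast
  ring

theorem hasDerivAt_comp_mul_ofReal_succ_of_recurrences {s : ℕ → ℂ → ℂ}
    (hdiff : ∀ n, Differentiable ℂ (s n))
    (hrec1 : ∀ (n : ℕ) (z : ℂ), z ≠ 0 →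
      deriv (s n) z = (n : ℂ) / z * s n z - s (n + 1) z)
    (hrec2 : ∀ (n : ℕ) (z : ℂ), z ≠ 0 →
      s n z + s (n + 2) z = (2 * (n : ℂ) + 3) / z * s (n + 1) z)
    (n : ℕ) {k : ℂ} (hk : k ≠ 0) {r : ℝ} (hr : r ≠ 0) :
    HasDerivAt (fun t : ℝ => s (n + 1) (k * t))
      (k * s n (k * r) - ((n : ℝ) + 2) / r * s (n + 1) (k * r)) r := by
  have hkr : k * r ≠ 0 := mul_ne_zero hk (ofReal_ne_zero.mpr hr)
  refine (hasDerivAt_comp_mul_ofReal (hdiff (n + 1) _)).congr_deriv ?_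
  rw [deriv_succ_eq_of_recurrences hrec1 hrec2 n hkr]
  field_simp
  push_cast
  ring

theorem hasDerivAt_sq_mul_mul_conj {a b : ℝ → ℂ} {k : ℂ} {ν r : ℝ} (hr : r ≠ 0)
    (ha : HasDerivAt a (ν / r * a r - k * b r) r)
    (hb : HasDerivAt b (k * a r - (ν + 2) / r * b r) r) :
    HasDerivAt (fun t : ℝ => (t : ℂ) ^ 2 * (k * b t * conj (a t)))
      ((r : ℂ) ^ 2 * (k ^ 2 * normSq (a r) - normSq k * normSq (b r))) r := by
  have hsq : HasDerivAt (fun t : ℝ => (t : ℂ) ^ 2) (2 * r) r := by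
    simpa using (hasDerivAt_pow 2 (r : ℂ)).comp_ofReal
  have hconj : HasDerivAt (fun t => conj (a t)) (conj (ν / r * a r - k * b r)) r := ha.star
  refine (hsq.mul ((hb.const_mul k).mul hconj)).congr_deriv ?_
  have hr' : (r : ℂ) ≠ 0 := ofReal_ne_zero.mpr hr
  simp only [Pi.mul_apply, map_sub, map_mul, map_div₀, conj_ofReal, ← mul_conj]
  field_simp
  ring

theorem hasDerivAt_sq_mul_im_mul_conj {a b : ℝ → ℂ} {k : ℂ} {ν r : ℝ} (hr : r ≠ 0)
    (ha : HasDerivAt a (ν / r * a r - k * b r) r)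
    (hb : HasDerivAt b (k * a r - (ν + 2) / r * b r) r) :
    HasDerivAt (fun t : ℝ => t ^ 2 * (k * b t * conj (a t)).im)
      (r ^ 2 * ((k ^ 2).im * ‖a r‖ ^ 2)) r := by
  have hcomp : (fun t : ℝ => t ^ 2 * (k * b t * conj (a t)).im)
      = imCLM ∘ fun t : ℝ => (t : ℂ) ^ 2 * (k * b t * conj (a t)) := by
    funext t
    simp [← ofReal_pow]
  rw [hcomp]
  refine (imCLM.hasFDerivAt.comp_hasDerivAt r (hasDerivAt_sq_mul_mul_conj hr ha hb)).congr_deriv ?_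
  simp [← ofReal_pow, normSq_eq_norm_sq]

/-- First Lommel integral for spherical Bessel functions with complex wavenumber `k`,
`Im(k²) ≠ 0`: for any differentiable family `s : ℕ → ℂ → ℂ` satisfying the spherical
Bessel recurrences, the function `r ↦ r² Im(k s_{l+1}(kr) conj(s_l(kr)))/Im(k²)` is an
antiderivative of `r ↦ |s_l(kr)|² r²`, and hence (by regularity at `0`)
`∫₀^a |s_l(kr)|² r² dr = a² Im(k s_{l+1}(ka) conj(s_l(ka)))/Im(k²)`. -/
theorem lommel_first_integral (s : ℕ → ℂ → ℂ)
    (hdiff : ∀ n, Differentiable ℂ (s n))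
    (hrec1 : ∀ (n : ℕ) (z : ℂ), z ≠ 0 →
      deriv (s n) z = (n : ℂ) / z * s n z - s (n + 1) z)
    (hrec2 : ∀ (n : ℕ) (z : ℂ), z ≠ 0 →
      s n z + s (n + 2) z = (2 * (n : ℂ) + 3) / z * s (n + 1) z)
    (k : ℂ) (hk : (k ^ 2).im ≠ 0) (l : ℕ) :
    (∀ r : ℝ, r ≠ 0 →
      HasDerivAt
        (fun t : ℝ => t ^ 2 *
          (k * s (l + 1) (k * t) * (starRingEnd ℂ) (s l (k * t))).im / (k ^ 2).im)
        (‖s l (k * r)‖ ^ 2 * r ^ 2) r) ∧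
    ∀ a : ℝ,
      ∫ r in (0:ℝ)..a, ‖s l (k * r)‖ ^ 2 * r ^ 2
        = a ^ 2 * (k * s (l + 1) (k * a) * (starRingEnd ℂ) (s l (k * a))).im
            / (k ^ 2).im := by
  have hk0 : k ≠ 0 := by
    rintro rfl
    simp at hk
  have hderiv : ∀ r : ℝ, r ≠ 0 → HasDerivAt
      (fun t : ℝ => t ^ 2 * (k * s (l + 1) (k * t) * conj (s l (k * t))).im / (k ^ 2).im)
      (‖s l (k * r)‖ ^ 2 * r ^ 2) r := fun r hr =>
    ((hasDerivAt_sq_mul_im_mul_conj hr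
      (hasDerivAt_comp_mul_ofReal_of_recurrences hdiff hrec1 l hk0 hr)
      (hasDerivAt_comp_mul_ofReal_succ_of_recurrences hdiff hrec1 hrec2 l hk0 hr)).div_const
        _).congr_deriv (by field_simp)
  refine ⟨hderiv, fun a => ?_⟩
  have hs : ∀ n, Continuous (s n) := fun n => (hdiff n).continuous
  have hne : ∀ x ∈ Set.Ioo (min 0 a) (max 0 a), x ≠ 0 := by
    rintro x hx rfl
    simp only [Set.mem_Ioo, min_lt_iff, lt_max_iff, lt_self_iff_false, false_or] at hx
    exact lt_asymm hx.1 hx.2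
  rw [integral_eq_sub_of_hasDeriv_right (by fun_prop)
    (fun x hx => (hderiv x (hne x hx)).hasDerivWithinAt)
    (Continuous.intervalIntegrable (by fun_prop) _ _)]
  simp
end

section
/- Leading-order pole of the Mie denominator: the function f_l(ε, √ε_b, k₀a) = i(k_b a)^l ξ_l(k_b a)(ka)^{-l} ψ_l′(ka)·ε_b − i(ka)^{-l-1} ψ_l(ka)(k_b a)^{l+1} ξ_l′(k_b a)·ε, with k = k₀√ε и k_b = k₀√ε_b, satisfies f_l(ε, √ε_b, 0) = (l/(2l+1))·ε + ((l+1)/(2l+1))·ε_b, i.e., its limit as k₀a → 0 equals (l ε + (l+1) ε_b)/(2l+1). -/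
open Complex

/-- The operator `(1/z) d/dz` acting on functions `ℂ → ℂ`. -/
noncomputable def besselOp (f : ℂ → ℂ) : ℂ → ℂ := fun z => deriv f z / z

/-- Spherical Bessel function of the first kind, via the Rayleigh formula
`j_l(z) = (-z)^l (z⁻¹ d/dz)^l (sin z / z)`. -/
noncomputable def sphJ (l : ℕ) (z : ℂ) : ℂ :=
  (-z) ^ l * (besselOp^[l] (fun w => Complex.sin w / w)) z

/-- Spherical Bessel function of the second kind, via the Rayleigh formula
`y_l(z) = -(-z)^l (z⁻¹ d/dz)^l (cos z / z)`. -/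
noncomputable def sphY (l : ℕ) (z : ℂ) : ℂ :=
  -(-z) ^ l * (besselOp^[l] (fun w => Complex.cos w / w)) z

/-- Riccati–Bessel function `ψ_l(z) = z j_l(z)`. -/
noncomputable def riccatiPsi (l : ℕ) (z : ℂ) : ℂ := z * sphJ l z

/-- Riccati–Bessel function `ξ_l(z) = z h_l^{(1)}(z) = z (j_l(z) + i y_l(z))`. -/
noncomputable def riccatiXi (l : ℕ) (z : ℂ) : ℂ := z * (sphJ l z + Complex.I * sphY l z)

open Filter Topology

/-- Principal branch complex square root. -/
noncomputable def csqrt (z : ℂ) : ℂ := z ^ ((1 : ℂ) / 2)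

/-!
Write `j_l(z) = z^l U_l(z²)` and `y_l(z) = -V_l(z²) / z^(l+1)`. The Rayleigh operator `z⁻¹ d/dz`
sends `G(z²) / z^m` to `(2tG' - mG)(z²) / z^(m+2)`, so `U_{l+1} = -2 U_l'` and
`V_{l+1} = (2l+1) V_l - 2t V_l'`, starting from the Taylor series of `sin z / z` and `cos z`.
Hence `U_l` and `V_l` are entire with `U_l(0) = 1/(2l+1)‼` and `V_l(0) = (2l-1)‼`. In terms of them
the four factors `z^l ξ_l`, `z^(-l) ψ_l'`, `z^(-l-1) ψ_l`, `z^(l+1) ξ_l'` are entire, so the limit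
is their value at `0`, namely `(2l-1)‼/(2l+1)‼ · (l ε + (l+1) ε_b) = (l ε + (l+1) ε_b)/(2l+1)`.
-/

open Nat

noncomputable section

namespace RiccatiBessel

def EntireCoeffs (c : ℕ → ℂ) : Prop :=
  ∀ r : ℝ, 0 ≤ r → Summable fun n => ‖c n‖ * r ^ n

def powSeries (c : ℕ → ℂ) (w : ℂ) : ℂ := ∑' n, c n * w ^ n

def derivCoeffs (c : ℕ → ℂ) (n : ℕ) : ℂ := (n + 1) * c (n + 1)

theorem powSeries_zero (c : ℕ → ℂ) : powSeries c 0 = c 0 := by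
  rw [powSeries, tsum_eq_single 0 fun n hn => by simp [zero_pow hn]]
  simp

theorem iterate_derivCoeffs_apply_zero (c : ℕ → ℂ) (l : ℕ) : derivCoeffs^[l] c 0 = l ! * c l := by
  suffices ∀ n, n ! * derivCoeffs^[l] c n = (n + l)! * c (n + l) by simpa using this 0
  induction l with
  | zero => simp
  | succ l ih =>
    intro n
    have h := ih (n + 1)
    rw [Nat.factorial_succ, show n + 1 + l = n + (l + 1) by ring] at h
    rw [Function.iterate_succ_apply', derivCoeffs]
    push_cast at h ⊢
    linear_combination h

namespace EntireCoeffs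

variable {c : ℕ → ℂ}

theorem of_norm_le_inv_factorial (h : ∀ n, ‖c n‖ ≤ (n ! : ℝ)⁻¹) : EntireCoeffs c := fun r hr =>
  (Real.summable_pow_div_factorial r).of_nonneg_of_le (fun n => by positivity) fun n =>
    calc ‖c n‖ * r ^ n ≤ (n ! : ℝ)⁻¹ * r ^ n := by gcongr; exact h n
      _ = r ^ n / n ! := inv_mul_eq_div _ _

theorem summable (hc : EntireCoeffs c) (w : ℂ) : Summable fun n => c n * w ^ n :=
  .of_norm <| by simpa [norm_mul, norm_pow] using hc ‖w‖ (norm_nonneg w)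

theorem natCast_mul (hc : EntireCoeffs c) : EntireCoeffs fun n => n * c n := by
  intro r hr
  refine (hc (2 * r + 2) (by linarith)).of_nonneg_of_le (fun n => by positivity) fun n => ?_
  have hn : (n : ℝ) * r ^ n ≤ (2 * r + 2) ^ n :=
    calc (n : ℝ) * r ^ n ≤ 2 ^ n * (r + 1) ^ n := by
          gcongr
          · exact_mod_cast Nat.lt_two_pow_self.le
          · linarith
      _ = (2 * r + 2) ^ n := by rw [← mul_pow]; ring
  rw [norm_mul, Complex.norm_natCast, mul_comm (n : ℝ), mul_assoc]
  exact mul_le_mul_of_nonneg_left hn (norm_nonneg _)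

theorem derivCoeffs (hc : EntireCoeffs c) : EntireCoeffs (derivCoeffs c) := by
  intro r hr
  have hshift := (hc.natCast_mul (r + 1) (by linarith)).comp_injective (add_left_injective 1)
  refine hshift.of_nonneg_of_le (fun n => by positivity) fun n =>
    calc ‖RiccatiBessel.derivCoeffs c n‖ * r ^ n
        = ‖((n + 1 : ℕ) : ℂ) * c (n + 1)‖ * r ^ n := by simp [RiccatiBessel.derivCoeffs]
      _ ≤ ‖((n + 1 : ℕ) : ℂ) * c (n + 1)‖ * (r + 1) ^ (n + 1) := by
        gcongr
        calc r ^ n ≤ (r + 1) ^ n := by gcongr; linarith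
          _ ≤ (r + 1) ^ (n + 1) := pow_le_pow_right₀ (by linarith) n.le_succ

theorem hasDerivAt (hc : EntireCoeffs c) (w : ℂ) :
    HasDerivAt (powSeries c) (powSeries (RiccatiBessel.derivCoeffs c) w) w := by
  set R := ‖w‖ + 1
  have hR : 1 ≤ R := by simp [R]
  have hbound : ∀ (n : ℕ) (y : ℂ), ‖y‖ < R → ‖c n * (n * y ^ (n - 1))‖ ≤ ‖n * c n‖ * R ^ n := by
    intro n y hy
    rw [norm_mul, norm_mul, norm_mul, norm_pow, mul_left_comm, mul_assoc]
    gcongr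
    calc ‖y‖ ^ (n - 1) ≤ R ^ (n - 1) := by gcongr
      _ ≤ R ^ n := pow_le_pow_right₀ hR (Nat.sub_le n 1)
  have hw : ‖w‖ < R := by simp [R]
  have hsum : Summable fun n : ℕ => ‖(n : ℂ) * c n‖ * R ^ n := hc.natCast_mul R (by linarith)
  have htermwise := hasDerivAt_tsum_of_isPreconnected hsum Metric.isOpen_ball
    (convex_ball (0 : ℂ) R).isPreconnected (fun n y _ => (hasDerivAt_pow n y).const_mul (c n))
    (fun n y hy => hbound n y (by simpa using hy))
    (Metric.mem_ball_self (x := (0 : ℂ)) (by linarith)) (hc.summable 0) (by simpa using hw)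
  have hsum' : Summable fun n : ℕ => c n * (n * w ^ (n - 1)) :=
    .of_norm <| hsum.of_nonneg_of_le (fun _ => norm_nonneg _) fun n => hbound n w hw
  rw [show powSeries (RiccatiBessel.derivCoeffs c) w = ∑' n : ℕ, c n * (n * w ^ (n - 1)) from ?_]
  · exact htermwise
  rw [hsum'.tsum_eq_zero_add, powSeries]
  simp only [RiccatiBessel.derivCoeffs, Nat.cast_zero, zero_mul, mul_zero, zero_add]
  exact tsum_congr fun n => by push_cast; ring

theorem differentiable (hc : EntireCoeffs c) : Differentiable ℂ (powSeries c) :=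
  fun w => (hc.hasDerivAt w).differentiableAt

end EntireCoeffs

def sinCoeffs (n : ℕ) : ℂ := (-1) ^ n / (2 * n + 1)!

def cosCoeffs (n : ℕ) : ℂ := (-1) ^ n / (2 * n)!

theorem entireCoeffs_sinCoeffs : EntireCoeffs sinCoeffs :=
  .of_norm_le_inv_factorial fun n => by
    simpa [sinCoeffs] using inv_anti₀ (by positivity) (by exact_mod_cast factorial_le (by omega))

theorem entireCoeffs_cosCoeffs : EntireCoeffs cosCoeffs :=
  .of_norm_le_inv_factorial fun n => by
    simpa [cosCoeffs] using inv_anti₀ (by positivity) (by exact_mod_cast factorial_le (by omega))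

theorem sin_eq_mul_powSeries (z : ℂ) : Complex.sin z = z * powSeries sinCoeffs (z ^ 2) := by
  have h : HasSum (fun n => z * (sinCoeffs n * (z ^ 2) ^ n)) (z * powSeries sinCoeffs (z ^ 2)) :=
    (entireCoeffs_sinCoeffs.summable (z ^ 2)).hasSum.mul_left z
  refine (Complex.hasSum_sin z).unique ?_
  convert h using 2 with n
  rw [sinCoeffs, ← pow_mul]
  ring

theorem cos_eq_powSeries (z : ℂ) : Complex.cos z = powSeries cosCoeffs (z ^ 2) := by
  have h : HasSum (fun n => cosCoeffs n * (z ^ 2) ^ n) (powSeries cosCoeffs (z ^ 2)) :=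
    (entireCoeffs_cosCoeffs.summable (z ^ 2)).hasSum
  refine (Complex.hasSum_cos z).unique ?_
  convert h using 2 with n
  rw [cosCoeffs, ← pow_mul]
  ring

/-- The entire function `U_l` with `j_l(z) = z^l U_l(z²)`. -/
def besselU (l : ℕ) (t : ℂ) : ℂ := (-2) ^ l * powSeries (derivCoeffs^[l] sinCoeffs) t

/-- The entire function `V_l` with `y_l(z) = -V_l(z²) / z^(l+1)`. -/
def besselV : ℕ → ℂ → ℂ
  | 0 => powSeries cosCoeffs
  | l + 1 => fun t => (2 * l + 1) * besselV l t - 2 * t * deriv (besselV l) t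

theorem entireCoeffs_iterate_derivCoeffs_sinCoeffs (l : ℕ) :
    EntireCoeffs (derivCoeffs^[l] sinCoeffs) := by
  induction l with
  | zero => exact entireCoeffs_sinCoeffs
  | succ l ih => rw [Function.iterate_succ_apply']; exact ih.derivCoeffs

theorem differentiable_besselU (l : ℕ) : Differentiable ℂ (besselU l) :=
  (entireCoeffs_iterate_derivCoeffs_sinCoeffs l).differentiable.const_mul _

theorem differentiable_besselV : ∀ l, Differentiable ℂ (besselV l)
  | 0 => entireCoeffs_cosCoeffs.differentiable
  | l + 1 => by
    have h := differentiable_besselV l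
    exact (h.const_mul _).sub (((differentiable_const _).mul differentiable_id).mul h.deriv)

theorem besselU_succ (l : ℕ) (t : ℂ) : besselU (l + 1) t = -2 * deriv (besselU l) t := by
  have hd : HasDerivAt (besselU l)
      ((-2) ^ l * powSeries (derivCoeffs (derivCoeffs^[l] sinCoeffs)) t) t :=
    ((entireCoeffs_iterate_derivCoeffs_sinCoeffs l).hasDerivAt t).const_mul _
  rw [hd.deriv, besselU, Function.iterate_succ_apply', pow_succ]
  ring

theorem besselU_apply_zero (l : ℕ) : besselU l 0 = 1 / ((2 * l + 1)‼ : ℂ) := by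
  have hfac : ((2 * l + 1)! : ℂ) = (2 * l + 1)‼ * (2 ^ l * l !) := by
    rw [factorial_eq_mul_doubleFactorial, doubleFactorial_two_mul]
    push_cast
    ring
  have hsign : (-2 : ℂ) ^ l * (-1) ^ l = 2 ^ l := by rw [← mul_pow]; norm_num
  have hl : (l ! : ℂ) ≠ 0 := Nat.cast_ne_zero.mpr (factorial_ne_zero l)
  rw [besselU, powSeries_zero, iterate_derivCoeffs_apply_zero, sinCoeffs, hfac]
  calc (-2 : ℂ) ^ l * (l ! * ((-1) ^ l / ((2 * l + 1)‼ * (2 ^ l * l !))))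
      = ((-2) ^ l * (-1) ^ l) * l ! / ((2 * l + 1)‼ * (2 ^ l * l !)) := by ring
    _ = 1 / (2 * l + 1)‼ := by rw [hsign]; field_simp

theorem besselV_apply_zero : ∀ l, besselV l 0 = (2 * l - 1)‼
  | 0 => by simp [besselV, powSeries_zero, cosCoeffs]
  | l + 1 => by
    simp only [besselV, mul_zero, zero_mul, sub_zero]
    rw [besselV_apply_zero l, show 2 * (l + 1) - 1 = 2 * l + 1 by omega,
      doubleFactorial_add_one]
    push_cast
    ring

theorem hasDerivAt_comp_sq {G : ℂ → ℂ} {z : ℂ} (hG : DifferentiableAt ℂ G (z ^ 2)) :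
    HasDerivAt (fun w => G (w ^ 2)) (2 * z * deriv G (z ^ 2)) z :=
  (hG.hasDerivAt.comp z (hasDerivAt_pow 2 z)).congr_deriv (by simp; ring)

theorem hasDerivAt_comp_sq_div_pow {G : ℂ → ℂ} {z : ℂ} (m : ℕ) (hz : z ≠ 0)
    (hG : DifferentiableAt ℂ G (z ^ 2)) :
    HasDerivAt (fun w => G (w ^ 2) / w ^ m)
      ((2 * z ^ 2 * deriv G (z ^ 2) - m * G (z ^ 2)) / z ^ (m + 1)) z := by
  refine ((hasDerivAt_comp_sq hG).div (hasDerivAt_pow m z) (pow_ne_zero m hz)).congr_deriv ?_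
  rcases m with _ | m
  · field_simp
    ring
  · simp only [Nat.add_sub_cancel]
    field_simp
    push_cast
    ring

theorem besselOp_apply_of_eventuallyEq {f G : ℂ → ℂ} {z : ℂ} (m : ℕ) (hz : z ≠ 0)
    (hG : DifferentiableAt ℂ G (z ^ 2)) (hf : f =ᶠ[𝓝 z] fun w => G (w ^ 2) / w ^ m) :
    besselOp f z = (2 * z ^ 2 * deriv G (z ^ 2) - m * G (z ^ 2)) / z ^ (m + 2) := by
  rw [besselOp, hf.deriv_eq, (hasDerivAt_comp_sq_div_pow m hz hG).deriv]
  field_simp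
  ring

theorem besselOp_iterate_sin_div (l : ℕ) {z : ℂ} (hz : z ≠ 0) :
    besselOp^[l] (fun w => Complex.sin w / w) z = (-1) ^ l * besselU l (z ^ 2) := by
  induction l generalizing z with
  | zero =>
    rw [Function.iterate_zero_apply, sin_eq_mul_powSeries, besselU]
    field_simp
    simp
  | succ l ih =>
    have hf : besselOp^[l] (fun w => Complex.sin w / w) =ᶠ[𝓝 z]
        fun w => (fun t => (-1) ^ l * besselU l t) (w ^ 2) / w ^ 0 := by
      filter_upwards [isOpen_ne.mem_nhds hz] with w hw
      simp [ih hw]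
    rw [Function.iterate_succ_apply', besselOp_apply_of_eventuallyEq 0 hz
      ((differentiable_besselU l _).const_mul _) hf, deriv_const_mul_field', besselU_succ]
    field_simp
    ring

theorem besselOp_iterate_cos_div (l : ℕ) {z : ℂ} (hz : z ≠ 0) :
    besselOp^[l] (fun w => Complex.cos w / w) z
      = (-1) ^ l * besselV l (z ^ 2) / z ^ (2 * l + 1) := by
  induction l generalizing z with
  | zero => simp [besselV, cos_eq_powSeries]
  | succ l ih =>
    have hf : besselOp^[l] (fun w => Complex.cos w / w) =ᶠ[𝓝 z]
        fun w => (fun t => (-1) ^ l * besselV l t) (w ^ 2) / w ^ (2 * l + 1) := by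
      filter_upwards [isOpen_ne.mem_nhds hz] with w hw
      exact ih hw
    rw [Function.iterate_succ_apply', besselOp_apply_of_eventuallyEq _ hz
      ((differentiable_besselV l _).const_mul _) hf, deriv_const_mul_field', besselV]
    push_cast
    ring_nf

theorem sphJ_eq (l : ℕ) {z : ℂ} (hz : z ≠ 0) : sphJ l z = z ^ l * besselU l (z ^ 2) := by
  rw [sphJ, besselOp_iterate_sin_div l hz, ← mul_assoc, ← mul_pow]
  ring

theorem sphY_eq (l : ℕ) {z : ℂ} (hz : z ≠ 0) : sphY l z = -besselV l (z ^ 2) / z ^ (l + 1) := by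
  rw [sphY, besselOp_iterate_cos_div l hz, mul_div_assoc, ← mul_assoc, neg_mul, ← mul_pow]
  field_simp
  ring

theorem riccatiPsi_eq (l : ℕ) : riccatiPsi l = fun z => z ^ (l + 1) * besselU l (z ^ 2) := by
  funext z
  rcases eq_or_ne z 0 with rfl | hz
  · simp [riccatiPsi]
  · rw [riccatiPsi, sphJ_eq l hz]
    ring

theorem riccatiXi_eq (l : ℕ) {z : ℂ} (hz : z ≠ 0) :
    riccatiXi l z = z ^ (l + 1) * besselU l (z ^ 2) - I * (besselV l (z ^ 2) / z ^ l) := by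
  rw [riccatiXi, sphJ_eq l hz, sphY_eq l hz]
  field_simp
  ring

theorem hasDerivAt_riccatiPsi (l : ℕ) (z : ℂ) :
    HasDerivAt (riccatiPsi l)
      ((l + 1) * z ^ l * besselU l (z ^ 2) + 2 * z ^ (l + 2) * deriv (besselU l) (z ^ 2)) z := by
  rw [riccatiPsi_eq]
  exact ((hasDerivAt_pow (l + 1) z).mul
    (hasDerivAt_comp_sq (differentiable_besselU l _))).congr_deriv (by push_cast; ring)

theorem hasDerivAt_riccatiXi (l : ℕ) {z : ℂ} (hz : z ≠ 0) :
    HasDerivAt (riccatiXi l)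
      ((l + 1) * z ^ l * besselU l (z ^ 2) + 2 * z ^ (l + 2) * deriv (besselU l) (z ^ 2)
        - I * ((2 * z ^ 2 * deriv (besselV l) (z ^ 2) - l * besselV l (z ^ 2)) / z ^ (l + 1)))
      z := by
  have hXi : riccatiXi l =ᶠ[𝓝 z] fun w =>
      w ^ (l + 1) * besselU l (w ^ 2) - I * (besselV l (w ^ 2) / w ^ l) := by
    filter_upwards [isOpen_ne.mem_nhds hz] with w hw
    exact riccatiXi_eq l hw
  refine HasDerivAt.congr_of_eventuallyEq ?_ hXi
  exact (((hasDerivAt_pow (l + 1) z).mul (hasDerivAt_comp_sq (differentiable_besselU l _))).sub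
    ((hasDerivAt_comp_sq_div_pow l hz (differentiable_besselV l _)).const_mul I)).congr_deriv
    (by push_cast; ring)

theorem pow_mul_riccatiXi (l : ℕ) {z : ℂ} (hz : z ≠ 0) :
    z ^ l * riccatiXi l z = z ^ (2 * l + 1) * besselU l (z ^ 2) - I * besselV l (z ^ 2) := by
  rw [riccatiXi_eq l hz]
  field_simp
  ring

theorem zpow_neg_mul_deriv_riccatiPsi (l : ℕ) {z : ℂ} (hz : z ≠ 0) :
    z ^ (-(l : ℤ)) * deriv (riccatiPsi l) z
      = (l + 1) * besselU l (z ^ 2) + 2 * z ^ 2 * deriv (besselU l) (z ^ 2) := by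
  rw [(hasDerivAt_riccatiPsi l z).deriv, zpow_neg, zpow_natCast]
  field_simp
  ring

theorem zpow_neg_sub_one_mul_riccatiPsi (l : ℕ) {z : ℂ} (hz : z ≠ 0) :
    z ^ (-(l : ℤ) - 1) * riccatiPsi l z = besselU l (z ^ 2) := by
  rw [riccatiPsi_eq, show -(l : ℤ) - 1 = -((l + 1 : ℕ) : ℤ) by push_cast; ring, zpow_neg,
    zpow_natCast]
  field_simp

theorem pow_succ_mul_deriv_riccatiXi (l : ℕ) {z : ℂ} (hz : z ≠ 0) :
    z ^ (l + 1) * deriv (riccatiXi l) z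
      = (l + 1) * z ^ (2 * l + 1) * besselU l (z ^ 2)
          + 2 * z ^ (2 * l + 3) * deriv (besselU l) (z ^ 2)
          - I * (2 * z ^ 2 * deriv (besselV l) (z ^ 2) - l * besselV l (z ^ 2)) := by
  rw [(hasDerivAt_riccatiXi l hz).deriv]
  field_simp
  ring

theorem tendsto_nhdsNE_of_eq_continuous {f g : ℂ → ℂ} (hg : Continuous g)
    (hfg : ∀ z ≠ 0, f z = g z) : Tendsto f (𝓝[≠] 0) (𝓝 (g 0)) :=
  ((hg.tendsto 0).mono_left nhdsWithin_le_nhds).congr'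
    (eventually_nhdsWithin_of_forall fun z hz => (hfg z hz).symm)

theorem tendsto_pow_mul_riccatiXi (l : ℕ) :
    Tendsto (fun z => z ^ l * riccatiXi l z) (𝓝[≠] 0) (𝓝 (-I * (2 * l - 1)‼)) := by
  have hU := (differentiable_besselU l).continuous
  have hV := (differentiable_besselV l).continuous
  convert tendsto_nhdsNE_of_eq_continuous (by fun_prop) fun z hz => pow_mul_riccatiXi l hz
    using 2
  simp [besselV_apply_zero]

theorem tendsto_zpow_neg_mul_deriv_riccatiPsi (l : ℕ) :
    Tendsto (fun z => z ^ (-(l : ℤ)) * deriv (riccatiPsi l) z) (𝓝[≠] 0)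
      (𝓝 ((l + 1) / (2 * l + 1)‼)) := by
  have hU := (differentiable_besselU l).continuous
  have hU' := (differentiable_besselU l).deriv.continuous
  convert tendsto_nhdsNE_of_eq_continuous (by fun_prop)
    fun z hz => zpow_neg_mul_deriv_riccatiPsi l hz using 2
  simp [besselU_apply_zero, div_eq_mul_inv]

theorem tendsto_zpow_neg_sub_one_mul_riccatiPsi (l : ℕ) :
    Tendsto (fun z => z ^ (-(l : ℤ) - 1) * riccatiPsi l z) (𝓝[≠] 0) (𝓝 (1 / (2 * l + 1)‼)) := by
  have hU := (differentiable_besselU l).continuous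
  convert tendsto_nhdsNE_of_eq_continuous (by fun_prop)
    fun z hz => zpow_neg_sub_one_mul_riccatiPsi l hz using 2
  simp [besselU_apply_zero]

theorem tendsto_pow_succ_mul_deriv_riccatiXi (l : ℕ) :
    Tendsto (fun z => z ^ (l + 1) * deriv (riccatiXi l) z) (𝓝[≠] 0)
      (𝓝 (I * l * (2 * l - 1)‼)) := by
  have hU := (differentiable_besselU l).continuous
  have hU' := (differentiable_besselU l).deriv.continuous
  have hV := (differentiable_besselV l).continuous
  have hV' := (differentiable_besselV l).deriv.continuous
  convert tendsto_nhdsNE_of_eq_continuous (by fun_prop)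
    fun z hz => pow_succ_mul_deriv_riccatiXi l hz using 2
  simp [besselV_apply_zero]
  ring

theorem csqrt_ne_zero {z : ℂ} (hz : z ≠ 0) : csqrt z ≠ 0 :=
  fun h => hz ((cpow_eq_zero_iff _ _).mp h).1

theorem tendsto_mul_ofReal_nhdsGT {c : ℂ} (hc : c ≠ 0) :
    Tendsto (fun x : ℝ => c * x) (𝓝[>] 0) (𝓝[≠] 0) := by
  refine tendsto_nhdsWithin_iff.mpr ⟨?_, ?_⟩
  · exact ((continuous_const.mul continuous_ofReal).tendsto' 0 0 (by simp)).mono_left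
      nhdsWithin_le_nhds
  · filter_upwards [self_mem_nhdsWithin] with x hx
    exact mul_ne_zero hc (ofReal_ne_zero.mpr hx.ne')

end RiccatiBessel

end

open RiccatiBessel

theorem mie_denominator_limit_general (l : ℕ) (ε εb : ℂ) (hε : ε ≠ 0) (hεb : εb ≠ 0) :
    Tendsto (fun x : ℝ =>
        Complex.I * ((csqrt εb * x) ^ l * riccatiXi l (csqrt εb * x))
            * ((csqrt ε * x) ^ (-(l : ℤ)) * deriv (riccatiPsi l) (csqrt ε * x)) * εb
          - Complex.I * ((csqrt ε * x) ^ (-(l : ℤ) - 1) * riccatiPsi l (csqrt ε * x))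
            * ((csqrt εb * x) ^ (l + 1) * deriv (riccatiXi l) (csqrt εb * x)) * ε)
      (𝓝[>] (0 : ℝ))
      (𝓝 (((l : ℂ) * ε + ((l : ℂ) + 1) * εb) / (2 * (l : ℂ) + 1))) := by
  have hka := tendsto_mul_ofReal_nhdsGT (csqrt_ne_zero hε)
  have hkba := tendsto_mul_ofReal_nhdsGT (csqrt_ne_zero hεb)
  have hlim := ((((tendsto_pow_mul_riccatiXi l).comp hkba).const_mul I).mul
      ((tendsto_zpow_neg_mul_deriv_riccatiPsi l).comp hka)).mul_const εb |>.sub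
    (((((tendsto_zpow_neg_sub_one_mul_riccatiPsi l).comp hka).const_mul I).mul
      ((tendsto_pow_succ_mul_deriv_riccatiXi l).comp hkba)).mul_const ε)
  have hodd : ((2 * l + 1)‼ : ℂ) = (2 * l + 1) * (2 * l - 1)‼ := by
    rw [doubleFactorial_add_one]; push_cast; ring
  have hval : ((l : ℂ) * ε + ((l : ℂ) + 1) * εb) / (2 * (l : ℂ) + 1)
      = I * (-I * (2 * l - 1)‼) * ((l + 1) / (2 * l + 1)‼) * εb
        - I * (1 / (2 * l + 1)‼) * (I * l * (2 * l - 1)‼) * ε := by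
    have h2l : (2 * l + 1 : ℂ) ≠ 0 := by norm_cast
    have hdf : ((2 * l - 1)‼ : ℂ) ≠ 0 := Nat.cast_ne_zero.mpr (doubleFactorial_pos _).ne'
    rw [hodd]
    field_simp
    rw [I_sq]
    ring
  rw [hval]
  exact hlim

/-- Leading-order pole of the Mie denominator: the function
`f_l(ε, √ε_b, k₀a) = i (k_b a)^l ξ_l(k_b a) (ka)^{-l} ψ_l′(ka) ε_b
  − i (ka)^{-l-1} ψ_l(ka) (k_b a)^{l+1} ξ_l′(k_b a) ε`
(with `ka = √ε·(k₀a)`, `k_b a = √ε_b·(k₀a)`) tends to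
`(l ε + (l+1) ε_b)/(2l+1)` as `k₀a → 0⁺`. -/
theorem mie_denominator_limit (l : ℕ) (hl : 1 ≤ l) (ε εb : ℂ) (hε : ε ≠ 0) (hεb : εb ≠ 0) :
    Tendsto (fun x : ℝ =>
        Complex.I * ((csqrt εb * x) ^ l * riccatiXi l (csqrt εb * x))
            * ((csqrt ε * x) ^ (-(l : ℤ)) * deriv (riccatiPsi l) (csqrt ε * x)) * εb
          - Complex.I * ((csqrt ε * x) ^ (-(l : ℤ) - 1) * riccatiPsi l (csqrt ε * x))
            * ((csqrt εb * x) ^ (l + 1) * deriv (riccatiXi l) (csqrt εb * x)) * ε)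
      (𝓝[>] (0 : ℝ))
      (𝓝 (((l : ℂ) * ε + ((l : ℂ) + 1) * εb) / (2 * (l : ℂ) + 1))) :=
  mie_denominator_limit_general l ε εb hε hεb
end
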